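/- arXiv:math/0208021 — 3 statements merged into one kernel-verified Lean document; each statement's English description precedes it below -/
import Mathlib

section
/- Let $\alpha,\beta$ be nef $(1,1)$-classes on a compact Kähler $n$-fold with $\alpha^p\ne 0$ and $\beta^q\ne 0$ for some integers $p,q>0$. If there exists an integer $k\ge i+j$ with $i(k-p)_+ + j(k-q)_+ < k$ (where $x_+=\max(x,0)$), then $\alpha^i\cdot\beta^j\ne 0$. -/
/-- **Theorem 2.3 (differentiated Hovanskii–Teissier inequality).**
Abstract setting: `R` is the real cohomology ring of a compact Kähler `n`-fold,
`Nef` the set of nef `(1,1)`-classes, `ω` a Kähler class, `integ` evaluation on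
the fundamental class.  Hypotheses record: the Kähler class pairs positively,
nefness is stable under adding `ε • ω`, the Hovanskii–Teissier inequality, and
the lower bound `(α + ε ω)^k · ω^{n-k} ≥ C ε^{(k-p)_+}` for a nef `α` with
`α^p ≠ 0`.  Conclusion: if `α^p ≠ 0`, `β^q ≠ 0` (`p, q > 0`) and there is an
integer `k ≥ i + j` with `i (k-p)_+ + j (k-q)_+ < k` (here `k - p` is truncated
subtraction, i.e. the positive part), then `α^i · β^j ≠ 0`. -/
theorem differentiated_hovanskii_teissier
    (R : Type*) [CommRing R] [Algebra ℝ R]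
    (n : ℕ) (Nef : Set R) (integ : R →ₗ[ℝ] ℝ)
    (ω : R) (hω : ω ∈ Nef) (hωn : 0 < integ (ω ^ n))
    (nefAdd : ∀ α ∈ Nef, ∀ ε : ℝ, 0 < ε → α + ε • ω ∈ Nef)
    (HT : ∀ α ∈ Nef, ∀ β ∈ Nef, ∀ i j k : ℕ, i + j ≤ k → k ≤ n →
      (integ (α ^ k * ω ^ (n - k))) ^ i * (integ (β ^ k * ω ^ (n - k))) ^ j *
        (integ (ω ^ n)) ^ (k - i - j) ≤
      (integ (α ^ i * β ^ j * ω ^ (n - i - j))) ^ k)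
    (lower : ∀ α ∈ Nef, ∀ p k : ℕ, p ≤ n → k ≤ n → α ^ p ≠ 0 →
      ∃ C : ℝ, 0 < C ∧ ∀ ε : ℝ, 0 < ε → ε ≤ 1 →
        C * ε ^ (k - p) ≤ integ ((α + ε • ω) ^ k * ω ^ (n - k)))
    (α β : R) (hα : α ∈ Nef) (hβ : β ∈ Nef)
    (p q : ℕ) (hp : 0 < p) (hq : 0 < q) (hpn : p ≤ n) (hqn : q ≤ n)
    (hαp : α ^ p ≠ 0) (hβq : β ^ q ≠ 0)
    (i j : ℕ)
    (hk : ∃ k : ℕ, i + j ≤ k ∧ k ≤ n ∧ i * (k - p) + j * (k - q) < k) :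
    α ^ i * β ^ j ≠ 0 := by

  obtain ⟨k, hijk, hkn, hm⟩ := hk
  intro h0
  obtain ⟨C₁, hC₁, hC₁'⟩ := lower α hα p k hpn hkn hαp
  obtain ⟨C₂, hC₂, hC₂'⟩ := lower β hβ q k hqn hkn hβq
  set D := integ (ω ^ n) with hD
  set P : Polynomial R := (Polynomial.C α + Polynomial.X * Polynomial.C ω) ^ i *
      (Polynomial.C β + Polynomial.X * Polynomial.C ω) ^ j *
      Polynomial.C (ω ^ (n - i - j)) with hP
  have hc0 : integ (P.coeff 0) = 0 := by
    rw [Polynomial.coeff_zero_eq_eval_zero]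
    simp only [hP, Polynomial.eval_mul, Polynomial.eval_pow, Polynomial.eval_add,
      Polynomial.eval_C, Polynomial.eval_X, zero_mul, add_zero]
    rw [h0, zero_mul, map_zero]
  set M : ℝ := ∑ m ∈ P.support, |integ (P.coeff m)| with hM
  have hM0 : 0 ≤ M := Finset.sum_nonneg fun _ _ => abs_nonneg _
  have hfeval : ∀ ε : ℝ, integ ((α + ε • ω) ^ i * (β + ε • ω) ^ j * ω ^ (n - i - j)) =
      ∑ m ∈ P.support, ε ^ m * integ (P.coeff m) := by
    intro ε
    have h1 : (α + ε • ω) ^ i * (β + ε • ω) ^ j * ω ^ (n - i - j)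
        = P.eval (algebraMap ℝ R ε) := by
      simp only [hP, Polynomial.eval_mul, Polynomial.eval_pow, Polynomial.eval_add,
        Polynomial.eval_C, Polynomial.eval_X, Algebra.smul_def]
    rw [h1, Polynomial.eval_eq_sum, Polynomial.sum_def, map_sum]
    refine Finset.sum_congr rfl fun m _ => ?_
    have h2 : P.coeff m * algebraMap ℝ R ε ^ m = ε ^ m • P.coeff m := by
      rw [Algebra.smul_def, ← map_pow, mul_comm]
    rw [h2, map_smul, smul_eq_mul]
  have hbound : ∀ ε : ℝ, 0 < ε → ε ≤ 1 →
      |integ ((α + ε • ω) ^ i * (β + ε • ω) ^ j * ω ^ (n - i - j))| ≤ M * ε := by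
    intro ε hε hε1
    rw [hfeval ε]
    calc |∑ m ∈ P.support, ε ^ m * integ (P.coeff m)|
        ≤ ∑ m ∈ P.support, |ε ^ m * integ (P.coeff m)| :=
          Finset.abs_sum_le_sum_abs _ _
      _ ≤ ∑ m ∈ P.support, |integ (P.coeff m)| * ε := by
          refine Finset.sum_le_sum fun m _ => ?_
          rcases Nat.eq_zero_or_pos m with hm0 | hm0
          · subst hm0
            rw [hc0]
            simp
          · rw [abs_mul, abs_pow, abs_of_pos hε, mul_comm]
            refine mul_le_mul_of_nonneg_left ?_ (abs_nonneg _)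
            calc ε ^ m ≤ ε ^ 1 := pow_le_pow_of_le_one hε.le hε1 hm0
              _ = ε := pow_one ε
      _ = M * ε := by rw [← Finset.sum_mul]
  set mm := i * (k - p) + j * (k - q) with hmm
  set c := C₁ ^ i * C₂ ^ j * D ^ (k - i - j) with hc
  have hcpos : 0 < c := by positivity
  have key : ∀ ε : ℝ, 0 < ε → ε ≤ 1 → c ≤ M ^ k * ε := by
    intro ε hε hε1
    have hHT := HT _ (nefAdd α hα ε hε) _ (nefAdd β hβ ε hε) i j k hijk hkn
    have h1 := hC₁' ε hε hε1
    have h2 := hC₂' ε hε hε1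
    have hL : c * ε ^ mm ≤
        (integ ((α + ε • ω) ^ i * (β + ε • ω) ^ j * ω ^ (n - i - j))) ^ k := by
      refine le_trans ?_ hHT
      have e1 : (C₁ * ε ^ (k - p)) ^ i ≤ (integ ((α + ε • ω) ^ k * ω ^ (n - k))) ^ i :=
        pow_le_pow_left₀ (by positivity) h1 i
      have e2 : (C₂ * ε ^ (k - q)) ^ j ≤ (integ ((β + ε • ω) ^ k * ω ^ (n - k))) ^ j :=
        pow_le_pow_left₀ (by positivity) h2 j
      have e3 : (C₁ * ε ^ (k - p)) ^ i * (C₂ * ε ^ (k - q)) ^ j * D ^ (k - i - j)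
          ≤ (integ ((α + ε • ω) ^ k * ω ^ (n - k))) ^ i *
            (integ ((β + ε • ω) ^ k * ω ^ (n - k))) ^ j * D ^ (k - i - j) := by
        refine mul_le_mul_of_nonneg_right (mul_le_mul e1 e2 (by positivity) ?_) ?_
        · exact pow_nonneg (le_trans (by positivity) h1) i
        · positivity
      refine le_trans (le_of_eq ?_) e3
      rw [mul_pow, mul_pow, ← pow_mul, ← pow_mul, hc, hmm, pow_add]
      ring
    have hR : (integ ((α + ε • ω) ^ i * (β + ε • ω) ^ j * ω ^ (n - i - j))) ^ k
        ≤ (M * ε) ^ k := by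
      calc (integ ((α + ε • ω) ^ i * (β + ε • ω) ^ j * ω ^ (n - i - j))) ^ k
          ≤ |integ ((α + ε • ω) ^ i * (β + ε • ω) ^ j * ω ^ (n - i - j))| ^ k := by
            rw [← abs_pow]; exact le_abs_self _
        _ ≤ (M * ε) ^ k := pow_le_pow_left₀ (abs_nonneg _) (hbound ε hε hε1) k
    have h3 : c * ε ^ mm ≤ M ^ k * ε ^ k := by
      calc c * ε ^ mm ≤ (M * ε) ^ k := le_trans hL hR
        _ = M ^ k * ε ^ k := mul_pow M ε k
    have hksplit : M ^ k * ε ^ k = (M ^ k * ε ^ (k - mm)) * ε ^ mm := by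
      rw [mul_assoc, ← pow_add, Nat.sub_add_cancel hm.le]
    have h4 : c ≤ M ^ k * ε ^ (k - mm) := by
      have := h3
      rw [hksplit] at this
      exact le_of_mul_le_mul_right this (pow_pos hε mm)
    calc c ≤ M ^ k * ε ^ (k - mm) := h4
      _ ≤ M ^ k * ε := by
          refine mul_le_mul_of_nonneg_left ?_ (by positivity)
          calc ε ^ (k - mm) ≤ ε ^ 1 :=
              pow_le_pow_of_le_one hε.le hε1 (by omega)
            _ = ε := pow_one ε
  set ε₀ : ℝ := min 1 (c / (2 * (M ^ k + 1))) with hε₀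
  have hε₀pos : 0 < ε₀ := lt_min one_pos (by positivity)
  have h5 := key ε₀ hε₀pos (min_le_left _ _)
  have h6 : M ^ k * ε₀ ≤ M ^ k * (c / (2 * (M ^ k + 1))) :=
    mul_le_mul_of_nonneg_left (min_le_right _ _) (by positivity)
  have h7 : M ^ k * (c / (2 * (M ^ k + 1))) < c := by
    rw [mul_div_assoc', div_lt_iff₀ (by positivity)]
    nlinarith [pow_nonneg hM0 k, hcpos]
  linarith
end

section
/- Let $\alpha$ be a real $(1,1)$-cohomology class and $\beta,\gamma_1,\dots,\gamma_{n-2}$ nef classes on a compact Kähler $n$-fold. Then $(\alpha\cdot\beta\cdot\gamma_1\cdots\gamma_{n-2})^2 \ge (\alpha^2\cdot\gamma_1\cdots\gamma_{n-2})(\beta^2\cdot\gamma_1\cdots\gamma_{n-2})$. -/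
/-- **Proposition 2.5.** Abstract setting: `R` is the real cohomology ring of a
compact Kähler `n`-fold (`n ≥ 2`), `Nef` the nef cone, `Kah` the Kähler cone,
`ω` a Kähler class, `integ` evaluation on the fundamental class.  Hypotheses
record: the Hovanskii–Teissier/Hodge-index inequality when the first class is
also nef, that `β + ε ω` is Kähler for nef `β` and `ε > 0`, and that
`a + λ β` is nef for Kähler `β` and `λ ≫ 1`.  Conclusion: for an arbitrary real
`(1,1)`-class `a` and nef classes `β, γ₁, …, γ_{n-2}`,
`(a·β·γ₁⋯γ_{n-2})² ≥ (a²·γ₁⋯γ_{n-2})(β²·γ₁⋯γ_{n-2})`. -/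
theorem hodge_index_type_inequality
    (R : Type*) [CommRing R] [Algebra ℝ R]
    (n : ℕ) (hn : 2 ≤ n)
    (Nef Kah : Set R) (hKN : Kah ⊆ Nef)
    (integ : R →ₗ[ℝ] ℝ) (ω : R) (hω : ω ∈ Kah)
    (kahAdd : ∀ β ∈ Nef, ∀ ε : ℝ, 0 < ε → β + ε • ω ∈ Kah)
    (absorb : ∀ β ∈ Kah, ∀ a : R, ∃ lam0 : ℝ, ∀ lam : ℝ, lam0 ≤ lam →
      a + lam • β ∈ Nef)
    -- the inequality is known when the first class is nef (Prop. 2.1)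
    (HTnef : ∀ a ∈ Nef, ∀ β ∈ Nef, ∀ γ : Fin (n - 2) → R, (∀ i, γ i ∈ Nef) →
      integ (a ^ 2 * ∏ i, γ i) * integ (β ^ 2 * ∏ i, γ i) ≤
        (integ (a * β * ∏ i, γ i)) ^ 2)
    (a β : R) (hβ : β ∈ Nef)
    (γ : Fin (n - 2) → R) (hγ : ∀ i, γ i ∈ Nef) :
    integ (a ^ 2 * ∏ i, γ i) * integ (β ^ 2 * ∏ i, γ i) ≤
      (integ (a * β * ∏ i, γ i)) ^ 2 := by
  set P := ∏ i, γ i with hP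
  set A := integ (a ^ 2 * P) with hA
  set c0 := integ (a * β * P) with hc0
  set c1 := integ (a * ω * P) with hc1
  set b0 := integ (β ^ 2 * P) with hb0
  set b1 := integ (β * ω * P) with hb1
  set b2 := integ (ω ^ 2 * P) with hb2
  -- Step 1: for Kähler classes the inequality holds with arbitrary `a`.
  have step : ∀ ε : ℝ, 0 < ε →
      A * (b0 + (2 * ε) * b1 + ε ^ 2 * b2) ≤ (c0 + ε * c1) ^ 2 := by
    intro ε hε
    set b : R := β + ε • ω with hb
    have hbK : b ∈ Kah := kahAdd β hβ ε hε
    obtain ⟨lam0, hlam0⟩ := absorb b hbK a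
    set lam := max lam0 0 with hlam
    have hnef : a + lam • b ∈ Nef := hlam0 lam (le_max_left _ _)
    have h := HTnef (a + lam • b) hnef b (hKN hbK) γ hγ
    set C := integ (a * b * P) with hC
    set B := integ (b ^ 2 * P) with hB
    have e1 : integ ((a + lam • b) ^ 2 * P) = A + (2 * lam) * C + lam ^ 2 * B := by
      have : (a + lam • b) ^ 2 * P
          = a ^ 2 * P + (2 * lam) • (a * b * P) + (lam ^ 2) • (b ^ 2 * P) := by
        simp only [Algebra.smul_def, map_mul, map_pow, map_ofNat]; ring
      rw [this, map_add, map_add, map_smul, map_smul, smul_eq_mul, smul_eq_mul,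
        ← hA, ← hC, ← hB]
    have e2 : integ ((a + lam • b) * b * P) = C + lam * B := by
      have : (a + lam • b) * b * P = a * b * P + lam • (b ^ 2 * P) := by
        simp only [Algebra.smul_def, map_mul, map_pow, map_ofNat]; ring
      rw [this, map_add, map_smul, smul_eq_mul, ← hC, ← hB]
    rw [e1, e2] at h
    have hAB : A * B ≤ C ^ 2 := by nlinarith [h]
    have eC : C = c0 + ε * c1 := by
      rw [hC, hb]
      have : a * (β + ε • ω) * P = a * β * P + ε • (a * ω * P) := by
        simp only [Algebra.smul_def, map_mul, map_pow, map_ofNat]; ring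
      rw [this, map_add, map_smul, smul_eq_mul, ← hc0, ← hc1]
    have eB : B = b0 + (2 * ε) * b1 + ε ^ 2 * b2 := by
      rw [hB, hb]
      have : (β + ε • ω) ^ 2 * P
          = β ^ 2 * P + (2 * ε) • (β * ω * P) + (ε ^ 2) • (ω ^ 2 * P) := by
        simp only [Algebra.smul_def, map_mul, map_pow, map_ofNat]; ring
      rw [this, map_add, map_add, map_smul, map_smul, smul_eq_mul, smul_eq_mul,
        ← hb0, ← hb1, ← hb2]
    rw [eC, eB] at hAB
    exact hAB
  -- Step 2: let `ε → 0⁺`.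
  have key : A * b0 ≤ c0 ^ 2 := by
    set g : ℝ → ℝ := fun ε => (c0 + ε * c1) ^ 2 - A * (b0 + (2 * ε) * b1 + ε ^ 2 * b2)
      with hg
    have hcont : Continuous g := by fun_prop
    have htend : Filter.Tendsto g (nhdsWithin 0 (Set.Ioi 0)) (nhds (g 0)) :=
      (hcont.tendsto 0).mono_left nhdsWithin_le_nhds
    have hpos : ∀ᶠ ε in nhdsWithin 0 (Set.Ioi 0), 0 ≤ g ε := by
      filter_upwards [self_mem_nhdsWithin] with ε hε
      have := step ε hε
      simp only [hg]
      linarith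
    have h0 : 0 ≤ g 0 := ge_of_tendsto htend hpos
    simp only [hg, zero_mul, mul_zero, add_zero, ne_eq, OfNat.ofNat_ne_zero,
      not_false_eq_true, zero_pow] at h0
    nlinarith [h0]
  exact key
end

section
/- Let $n\ge3$ and suppose real (1,1)-classes on a compact Kähler threefold satisfy the Hodge index inequality $(\alpha\cdot\beta\cdot\gamma)^2\ge(\alpha^2\cdot\gamma)(\beta^2\cdot\gamma)$ for all $\beta,\gamma$ nef. If $A$ is nef with $A^3=0$ but $A^2\cdot\omega>0$ for a Kähler class $\omega$, and $B$ is any class with $A^2\cdot B=0$, then $A\cdot B^2\le 0$. -/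
/-- **Abstract version of Lemma 6.4.** `R` is the real cohomology ring of a
compact Kähler threefold, `Nef` the nef cone, `ω` a Kähler class, `integ`
evaluation on the fundamental class (triple intersection numbers).  Assume the
Hodge index inequality `(α·β·γ)² ≥ (α²·γ)(β²·γ)` holds for all `β, γ` nef, and
that nefness is stable under adding `ε • ω`.  If `A` is nef with `A³ = 0` but
`A²·ω > 0`, and `B` is any class with `A²·B = 0`, then `A·B² ≤ 0`. -/
theorem abstract_lemma_6_4
    (R : Type*) [CommRing R] [Algebra ℝ R]
    (Nef : Set R) (integ : R →ₗ[ℝ] ℝ) (ω : R) (hω : ω ∈ Nef)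
    (nefAdd : ∀ α ∈ Nef, ∀ ε : ℝ, 0 < ε → α + ε • ω ∈ Nef)
    (HI : ∀ α : R, ∀ β ∈ Nef, ∀ γ ∈ Nef,
      integ (α ^ 2 * γ) * integ (β ^ 2 * γ) ≤ (integ (α * β * γ)) ^ 2)
    (A : R) (hA : A ∈ Nef)
    (hA3 : integ (A ^ 3) = 0) (hA2ω : 0 < integ (A ^ 2 * ω))
    (B : R) (hAB : integ (A ^ 2 * B) = 0) :
    integ (A * B ^ 2) ≤ 0 := by
  by_contra h
  push_neg at h
  set L := integ (A * B ^ 2) with hL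
  set c := integ (A ^ 2 * ω) with hc
  set d := integ (ω ^ 2 * A) with hd
  set e := integ (B * ω * A) with he
  set ε : ℝ := min (L * c / (e ^ 2 + 1)) (c / (|d| + 1)) with hε
  have he2 : (0:ℝ) < e ^ 2 + 1 := by positivity
  have hd1 : (0:ℝ) < |d| + 1 := by positivity
  have hεpos : 0 < ε := by
    apply lt_min
    · positivity
    · positivity
  have hnef := nefAdd A hA ε hεpos
  have key := HI B (A + ε • ω) hnef A hA
  have expand1 : (A + ε • ω) ^ 2 * A = A ^ 3 + (2 * ε) • (A ^ 2 * ω) + (ε ^ 2) • (ω ^ 2 * A) := by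
    simp only [Algebra.smul_def, map_mul, map_pow, map_ofNat]; ring
  have expand2 : B * (A + ε • ω) * A = A ^ 2 * B + ε • (B * ω * A) := by
    simp only [Algebra.smul_def, map_mul, map_pow, map_ofNat]; ring
  have expand3 : B ^ 2 * A = A * B ^ 2 := by ring
  rw [expand1, expand2, expand3, map_add, map_add, map_add, map_smul, map_smul, map_smul,
    hA3, hAB] at key
  simp only [smul_eq_mul, zero_add] at key
  -- key : L * (2 * ε * c + ε ^ 2 * d) ≤ (ε * e) ^ 2
  have h1 : ε ≤ L * c / (e ^ 2 + 1) := min_le_left _ _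
  have h2 : ε ≤ c / (|d| + 1) := min_le_right _ _
  have h1' : ε * (e ^ 2 + 1) ≤ L * c := by
    rw [← le_div_iff₀ he2] at *
    linarith [h1]
  have h2' : ε * (|d| + 1) ≤ c := by
    rw [← le_div_iff₀ hd1] at *
    linarith [h2]
  have habs : -|d| ≤ d := neg_abs_le d
  have h3 : c ≤ 2 * c + ε * d := by nlinarith [abs_nonneg d, hεpos.le]
  nlinarith [mul_le_mul_of_nonneg_left h3 h.le, hεpos, mul_pos h hA2ω]
end
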